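/- arXiv:2604.02751 — 3 statements merged into one kernel-verified Lean document; each statement's English description precedes it below -/
import Mathlib

section
/- Let k ≥ 1 and let μ be a Borel probability measure on ℝ^k. For every τ > 0 and every y ∈ ℝ^k, Tweedie's formula holds: τ · ∇_y log p_τ(y) = m_τ(y) − y, where m_τ(y) = (∫ x φ_τ^{(k)}(y − x) dμ(x)) / p_τ(y) is the posterior mean of a clean sample given the noisy observation y. -/
open MeasureTheory

noncomputable section

abbrev Euc (k : ℕ) : Type := EuclideanSpace ℝ (Fin k)

/-- The centered Gaussian density on `ℝ^k` with covariance `τ • I`. -/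
def gaussDensity (k : ℕ) (τ : ℝ) (z : Euc k) : ℝ :=
  (2 * Real.pi * τ) ^ (-(k : ℝ) / 2) * Real.exp (-‖z‖ ^ 2 / (2 * τ))

/-- The heat-smoothed density `p_τ(x) = ∫ φ_τ(x - y) dμ(y)`. -/
def heatDensity {k : ℕ} (μ : Measure (Euc k)) (τ : ℝ) (x : Euc k) : ℝ :=
  ∫ y, gaussDensity k τ (x - y) ∂μ

/-- Partial derivative of `f` in the `i`-th coordinate direction. -/
def pderiv' {k : ℕ} (f : Euc k → ℝ) (i : Fin k) (x : Euc k) : ℝ :=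
  fderiv ℝ f x (EuclideanSpace.single i 1)

/-- Entry `(i, j)` of the Hessian matrix of `f` at `x`. -/
def hessEntry {k : ℕ} (f : Euc k → ℝ) (i j : Fin k) (x : Euc k) : ℝ :=
  pderiv' (pderiv' f j) i x

/-- The Laplacian of `f` at `x`. -/
def laplacian' {k : ℕ} (f : Euc k → ℝ) (x : Euc k) : ℝ :=
  ∑ i, hessEntry f i i x

/-- The squared Frobenius norm of the Hessian of `f` at `x`. -/
def hessFrobSq {k : ℕ} (f : Euc k → ℝ) (x : Euc k) : ℝ :=
  ∑ i, ∑ j, hessEntry f i j x ^ 2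

/-- The log heat-smoothed density. -/
def logHeat {k : ℕ} (μ : Measure (Euc k)) (τ : ℝ) (x : Euc k) : ℝ :=
  Real.log (heatDensity μ τ x)

/-- The Fisher Information `I^{(k)}(μ_τ) = ∫ p_τ ‖∇ log p_τ‖²`. -/
def FisherInfo {k : ℕ} (μ : Measure (Euc k)) (τ : ℝ) : ℝ :=
  ∫ x, heatDensity μ τ x * ‖gradient (logHeat μ τ) x‖ ^ 2

/-- The Fisher Information Rate `R^{(k)}(μ_τ) = ∫ p_τ ‖∇² log p_τ‖_F²`. -/
def FisherInfoRate {k : ℕ} (μ : Measure (Euc k)) (τ : ℝ) : ℝ :=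
  ∫ x, heatDensity μ τ x * hessFrobSq (logHeat μ τ) x

/-- The posterior mean `m_τ(x)` of a clean sample given noisy observation `x`. -/
def postMean {k : ℕ} (μ : Measure (Euc k)) (τ : ℝ) (x : Euc k) : Euc k :=
  (heatDensity μ τ x)⁻¹ • ∫ y, gaussDensity k τ (x - y) • y ∂μ

/-! Since `‖∇φ_τ(z)‖ = τ⁻¹ φ_τ(z) ‖z‖` is bounded and `μ` is finite, `p_τ` may be differentiated
under the integral sign: `τ ∇p_τ(y) = ∫ φ_τ(y - x) (x - y) dμ(x) = p_τ(y) (m_τ(y) - y)`.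
Dividing by `p_τ(y) > 0` gives the formula for `∇ log p_τ = ∇p_τ / p_τ`. -/

open MeasureTheory Real InnerProductSpace

section Gradient

variable {E : Type*} [NormedAddCommGroup E] [InnerProductSpace ℝ E] [CompleteSpace E]

theorem HasGradientAt.log {f : E → ℝ} {g x : E} (hf : HasGradientAt f g x) (hx : f x ≠ 0) :
    HasGradientAt (fun y => Real.log (f y)) ((f x)⁻¹ • g) x := by
  rw [hasGradientAt_iff_hasFDerivAt, map_smul]
  exact (hasDerivAt_log hx).comp_hasFDerivAt x hf.hasFDerivAt

theorem hasGradientAt_integral_of_dominated_of_gradient_le {α : Type*} [MeasurableSpace α]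
    {μ : Measure α} {F : E → α → ℝ} {F' : E → α → E} {x₀ : E} {s : Set E} {bound : α → ℝ}
    (hs : s ∈ nhds x₀) (hF_meas : ∀ᶠ x in nhds x₀, AEStronglyMeasurable (F x) μ)
    (hF_int : Integrable (F x₀) μ) (hF'_meas : AEStronglyMeasurable (F' x₀) μ)
    (h_bound : ∀ᵐ a ∂μ, ∀ x ∈ s, ‖F' x a‖ ≤ bound a) (bound_integrable : Integrable bound μ)
    (h_diff : ∀ᵐ a ∂μ, ∀ x ∈ s, HasGradientAt (F · a) (F' x a) x) :
    HasGradientAt (fun x => ∫ a, F x a ∂μ) (∫ a, F' x₀ a ∂μ) x₀ := by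
  have h_comm : ∫ a, toDual ℝ E (F' x₀ a) ∂μ = toDual ℝ E (∫ a, F' x₀ a ∂μ) :=
    (toDual ℝ E).toLinearIsometry.integral_comp_comm _
  rw [hasGradientAt_iff_hasFDerivAt, ← h_comm]
  refine hasFDerivAt_integral_of_dominated_of_fderiv_le hs hF_meas hF_int
    ((toDual ℝ E).continuous.comp_aestronglyMeasurable hF'_meas) ?_ bound_integrable h_diff
  simpa only [LinearIsometryEquiv.norm_map] using h_bound

end Gradient

variable {k : ℕ} {τ : ℝ}

theorem le_exp_sq (x : ℝ) : x ≤ exp (x ^ 2) := by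
  nlinarith [add_one_le_exp (x ^ 2), sq_nonneg (x - 1)]

theorem mul_exp_neg_sq_div_le (hτ : 0 < τ) (t : ℝ) : t * exp (-t ^ 2 / (2 * τ)) ≤ √(2 * τ) := by
  have hs : 0 < √(2 * τ) := sqrt_pos.2 (by positivity)
  have hx := le_exp_sq (t / √(2 * τ))
  rw [div_pow, sq_sqrt (by positivity), div_le_iff₀' hs] at hx
  rwa [neg_div, exp_neg, ← div_eq_mul_inv, div_le_iff₀ (exp_pos _)]

@[fun_prop]
theorem continuous_gaussDensity : Continuous (gaussDensity k τ) := by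
  unfold gaussDensity
  fun_prop

theorem gaussDensity_pos (hτ : 0 < τ) (z : Euc k) : 0 < gaussDensity k τ z := by
  unfold gaussDensity
  positivity

theorem gaussDensity_le_gaussDensity_zero (hτ : 0 < τ) (z : Euc k) :
    gaussDensity k τ z ≤ gaussDensity k τ 0 := by
  unfold gaussDensity
  gcongr
  simp

theorem norm_gaussDensity_smul_le (hτ : 0 < τ) (z : Euc k) :
    ‖gaussDensity k τ z • z‖ ≤ gaussDensity k τ 0 * √(2 * τ) := by
  rw [norm_smul, norm_of_nonneg (gaussDensity_pos hτ z).le]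
  unfold gaussDensity
  calc _ = (2 * π * τ) ^ (-(k : ℝ) / 2) * (‖z‖ * exp (-‖z‖ ^ 2 / (2 * τ))) := by ring
    _ ≤ (2 * π * τ) ^ (-(k : ℝ) / 2) * √(2 * τ) := by
      gcongr
      exact mul_exp_neg_sq_div_le hτ _
    _ = _ := by simp

theorem hasGradientAt_gaussDensity (z : Euc k) :
    HasGradientAt (gaussDensity k τ) (-τ⁻¹ • gaussDensity k τ z • z) z := by
  have hφ : gaussDensity k τ =
      fun z => (2 * π * τ) ^ (-(k : ℝ) / 2) * exp (-(2 * τ)⁻¹ * ‖z‖ ^ 2) := by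
    funext z
    unfold gaussDensity
    congr 2
    ring
  have h := (((hasStrictFDerivAt_norm_sq z).hasFDerivAt.const_mul (-(2 * τ)⁻¹)).exp).const_mul
    ((2 * π * τ) ^ (-(k : ℝ) / 2))
  rw [← hφ] at h
  refine h.congr_fderiv ?_
  ext v
  simp only [mul_inv_rev, neg_mul, neg_smul, smul_neg, neg_apply,
    smul_apply, innerSL_apply_apply, nsmul_eq_mul, Nat.cast_ofNat,
    smul_eq_mul, hφ, map_neg, map_smul, toDual_apply_apply, neg_inj]
  ring

section HeatDensity

variable (μ : Measure (Euc k)) [IsFiniteMeasure μ]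

theorem integrable_gaussDensity_sub (hτ : 0 < τ) (y : Euc k) :
    Integrable (fun a => gaussDensity k τ (y - a)) μ := by
  refine .of_bound (by fun_prop) (gaussDensity k τ 0) (ae_of_all _ fun a => ?_)
  rw [norm_of_nonneg (gaussDensity_pos hτ _).le]
  exact gaussDensity_le_gaussDensity_zero hτ _

theorem integrable_gaussDensity_sub_smul_sub (hτ : 0 < τ) (y : Euc k) :
    Integrable (fun a => gaussDensity k τ (y - a) • (y - a)) μ :=
  .of_bound (by fun_prop) _ (ae_of_all _ fun a => norm_gaussDensity_smul_le hτ (y - a))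

theorem integral_gaussDensity_sub_smul (hτ : 0 < τ) (y : Euc k) :
    ∫ a, gaussDensity k τ (y - a) • a ∂μ =
      heatDensity μ τ y • y - ∫ a, gaussDensity k τ (y - a) • (y - a) ∂μ := by
  have h (a : Euc k) : gaussDensity k τ (y - a) • a =
      gaussDensity k τ (y - a) • y - gaussDensity k τ (y - a) • (y - a) := by
    rw [← smul_sub, sub_sub_cancel]
  simp_rw [h]
  rw [integral_sub ((integrable_gaussDensity_sub μ hτ y).smul_const y)
    (integrable_gaussDensity_sub_smul_sub μ hτ y), integral_smul_const, heatDensity]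

theorem heatDensity_pos [NeZero μ] (hτ : 0 < τ) (y : Euc k) : 0 < heatDensity μ τ y := by
  rw [heatDensity, integral_pos_iff_support_of_nonneg (fun a => (gaussDensity_pos hτ _).le)
    (integrable_gaussDensity_sub μ hτ y)]
  have : Function.support (fun a => gaussDensity k τ (y - a)) = Set.univ :=
    Function.support_eq_univ fun a => (gaussDensity_pos hτ _).ne'
  simp [this, NeZero.ne μ]

theorem hasGradientAt_heatDensity (hτ : 0 < τ) (y : Euc k) :
    HasGradientAt (heatDensity μ τ) (-τ⁻¹ • ∫ a, gaussDensity k τ (y - a) • (y - a) ∂μ) y := by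
  rw [← integral_smul]
  refine hasGradientAt_integral_of_dominated_of_gradient_le (s := Set.univ)
    (F := fun x a => gaussDensity k τ (x - a))
    (F' := fun x a => -τ⁻¹ • gaussDensity k τ (x - a) • (x - a))
    (bound := fun _ => τ⁻¹ * (gaussDensity k τ 0 * √(2 * τ))) Filter.univ_mem
    (.of_forall fun x => by fun_prop) (integrable_gaussDensity_sub μ hτ y) (by fun_prop)
    (ae_of_all _ fun a x _ => ?_) (integrable_const _)
    (ae_of_all _ fun a x _ => ?_)
  · rw [norm_smul, norm_neg, norm_inv, norm_of_nonneg hτ.le]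
    gcongr
    exact norm_gaussDensity_smul_le hτ _
  · exact (hasFDerivAt_comp_sub a).2 (hasGradientAt_gaussDensity (x - a))

end HeatDensity

theorem tweedie_formula_general
    (k : ℕ) (μ : Measure (Euc k)) [IsProbabilityMeasure μ]
    (τ : ℝ) (hτ : 0 < τ) (y : Euc k) :
    τ • gradient (logHeat μ τ) y = postMean μ τ y - y := by
  have hp := (heatDensity_pos μ hτ y).ne'
  have hlog : HasGradientAt (logHeat μ τ) _ y := (hasGradientAt_heatDensity μ hτ y).log hp
  rw [hlog.gradient, postMean, integral_gaussDensity_sub_smul μ hτ y]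
  match_scalars
  · field_simp
  · simp [hp]

/-- Tweedie's formula `τ • ∇ log p_τ(y) = m_τ(y) - y`. -/
theorem tweedie_formula
    (k : ℕ) (hk : 1 ≤ k) (μ : Measure (Euc k)) [IsProbabilityMeasure μ]
    (τ : ℝ) (hτ : 0 < τ) (y : Euc k) :
    τ • gradient (logHeat μ τ) y = postMean μ τ y - y :=
  tweedie_formula_general k μ τ hτ y
end
end

section
/- (Fisher Information bounds for bi-Lipschitz encoders, full-dimensional form.) Let d ≥ 1 and let E : ℝ^d → ℝ^d be a C¹ diffeomorphism such that |det DE(x)| is constant in x and there exist constants 0 < c ≤ C with c‖v‖ ≤ ‖DE(x) v‖ ≤ C‖v‖ for all x, v ∈ ℝ^d. Let μ be a Borel probability measure on ℝ^d with a C¹ strictly positive density p whose Fisher Information I(μ) = ∫ p(x) ‖∇ log p(x)‖² dx is finite. Then the pushforward measure E_#μ has density q(z) = p(E^{-1}(z)) / |det DE(E^{-1}(z))|, its Fisher Information I(E_#μ) = ∫ q(z) ‖∇ log q(z)‖² dz is finite, and (1/C²) I(μ) ≤ I(E_#μ) ≤ (1/c²) I(μ). In particular I(E_#μ) = I(μ)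 when E is an isometry (c = C = 1). -/
open MeasureTheory

noncomputable section

/-- The Fisher Information of a probability density `p` on `ℝ^d`:
`I = ∫ p(x) ‖∇ log p(x)‖² dx`. -/
def fisherOfDensity {d : ℕ} (p : Euc d → ℝ) : ℝ :=
  ∫ x, p x * ‖gradient (fun y => Real.log (p y)) x‖ ^ 2

/-- The density of the pushforward of the measure with density `p` under the
diffeomorphism `Enc` with inverse `F`: `q(z) = p(F z) / |det DE(F z)|`. -/
def pushDensity {d : ℕ} (Enc F : Euc d → Euc d) (p : Euc d → ℝ) (z : Euc d) : ℝ :=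
  p (F z) / |(fderiv ℝ Enc (F z)).det|

/-! Since `|det DE| ≡ D` is constant, `q = (p ∘ E⁻¹) / D`, so `log q = log p ∘ E⁻¹ - log D` and
`D(log q)(E x) = D(log p)(x) ∘ DE(x)⁻¹`. The bounds on `DE` give `‖DE(x)‖ ≤ C` and
`‖DE(x)⁻¹‖ ≤ 1 / c`, hence `‖∇ log p x‖ / C ≤ ‖∇ log q (E x)‖ ≤ ‖∇ log p x‖ / c`. Integrating
`p ‖·‖²` after the change of variables `z = E x` gives the bounds on the Fisher information. -/

open Function

section LinearAlgebra

variable {𝕜 E F G : Type*} [NontriviallyNormedField 𝕜]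
  [NormedAddCommGroup E] [NormedSpace 𝕜 E] [NormedAddCommGroup F] [NormedSpace 𝕜 F]
  [NormedAddCommGroup G] [NormedSpace 𝕜 G]

theorem fderiv_comp_fderiv_of_leftInverse {f : E → F} {g : F → E} (hgf : LeftInverse g f)
    {x : E} (hg : DifferentiableAt 𝕜 g (f x)) (hf : DifferentiableAt 𝕜 f x) :
    (fderiv 𝕜 g (f x)).comp (fderiv 𝕜 f x) = ContinuousLinearMap.id 𝕜 E := by
  rw [← fderiv_comp x hg hf, show g ∘ f = id from funext hgf, fderiv_id]

namespace ContinuousLinearMap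

theorem opNorm_le_inv_of_comp_eq_id {A : E →L[𝕜] F} {B : F →L[𝕜] E} (hAB : A.comp B = .id 𝕜 F)
    {c : ℝ} (hc : 0 < c) (hA : ∀ v, c * ‖v‖ ≤ ‖A v‖) : ‖B‖ ≤ c⁻¹ := by
  refine opNorm_le_bound _ (inv_nonneg.2 hc.le) fun w => ?_
  have hw := hA (B w)
  rw [← comp_apply, hAB, id_apply] at hw
  rw [inv_mul_eq_div, le_div_iff₀ hc, mul_comm]
  exact hw

theorem opNorm_comp_le_div_of_comp_eq_id (L : E →L[𝕜] G) {A : E →L[𝕜] F} {B : F →L[𝕜] E}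
    (hAB : A.comp B = .id 𝕜 F) {c : ℝ} (hc : 0 < c) (hA : ∀ v, c * ‖v‖ ≤ ‖A v‖) :
    ‖L.comp B‖ ≤ ‖L‖ / c :=
  calc ‖L.comp B‖ ≤ ‖L‖ * ‖B‖ := opNorm_comp_le _ _
    _ ≤ ‖L‖ * c⁻¹ := by gcongr; exact opNorm_le_inv_of_comp_eq_id hAB hc hA

theorem div_le_opNorm_comp_of_comp_eq_id (L : E →L[𝕜] G) {A : E →L[𝕜] F} {B : F →L[𝕜] E}
    (hBA : B.comp A = .id 𝕜 E) {C : ℝ} (hC : 0 < C) (hA : ‖A‖ ≤ C) : ‖L‖ / C ≤ ‖L.comp B‖ := by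
  rw [div_le_iff₀ hC]
  calc ‖L‖ = ‖(L.comp B).comp A‖ := by rw [comp_assoc, hBA, comp_id]
    _ ≤ ‖L.comp B‖ * ‖A‖ := opNorm_comp_le _ _
    _ ≤ ‖L.comp B‖ * C := by gcongr

theorem det_ne_zero_of_comp_eq_id [FiniteDimensional 𝕜 E] {A B : E →L[𝕜] E}
    (hBA : B.comp A = .id 𝕜 E) : A.det ≠ 0 := by
  intro hA
  have h := congrArg ContinuousLinearMap.det hBA
  simp [ContinuousLinearMap.det, hA] at h

end ContinuousLinearMap

theorem det_fderiv_ne_zero_of_leftInverse [FiniteDimensional 𝕜 E] {f g : E → E}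
    (hgf : LeftInverse g f) {x : E} (hg : DifferentiableAt 𝕜 g (f x))
    (hf : DifferentiableAt 𝕜 f x) : (fderiv 𝕜 f x).det ≠ 0 :=
  ContinuousLinearMap.det_ne_zero_of_comp_eq_id (fderiv_comp_fderiv_of_leftInverse hgf hg hf)

end LinearAlgebra

theorem norm_gradient_eq_norm_fderiv {E : Type*} [NormedAddCommGroup E] [InnerProductSpace ℝ E]
    [CompleteSpace E] (f : E → ℝ) (x : E) : ‖gradient f x‖ = ‖fderiv ℝ f x‖ :=
  (InnerProductSpace.toDual ℝ E).symm.norm_map _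

theorem integrable_and_integral_bounds_of_le_const_mul {α : Type*} [MeasurableSpace α]
    {μ : Measure α} {f g : α → ℝ} {a b : ℝ} (hf : Integrable f μ) (hg : AEStronglyMeasurable g μ)
    (hg0 : ∀ x, 0 ≤ g x) (hag : ∀ x, a * f x ≤ g x) (hgb : ∀ x, g x ≤ b * f x) :
    Integrable g μ ∧ a * ∫ x, f x ∂μ ≤ ∫ x, g x ∂μ ∧ ∫ x, g x ∂μ ≤ b * ∫ x, f x ∂μ := by
  have hg_int : Integrable g μ := (hf.const_mul b).mono' hg
    (ae_of_all _ fun x => (Real.norm_of_nonneg (hg0 x)).trans_le (hgb x))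
  refine ⟨hg_int, ?_, ?_⟩ <;> rw [← integral_const_mul]
  · exact integral_mono (hf.const_mul a) hg_int hag
  · exact integral_mono hg_int (hf.const_mul b) hgb

theorem measurable_gradient {E : Type*} [NormedAddCommGroup E] [InnerProductSpace ℝ E]
    [CompleteSpace E] [MeasurableSpace E] [BorelSpace E] (f : E → ℝ) : Measurable (gradient f) := by
  unfold gradient
  fun_prop

namespace pushDensity

variable {d : ℕ} {Enc F : Euc d → Euc d} {p : Euc d → ℝ}

theorem abs_det_mul_apply (hleft : LeftInverse F Enc) {x : Euc d}
    (hdet : (fderiv ℝ Enc x).det ≠ 0) : |(fderiv ℝ Enc x).det| * pushDensity Enc F p (Enc x) = p x := by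
  rw [pushDensity, hleft x]
  field_simp

theorem map_withDensity
    (hEnc : Differentiable ℝ Enc) (hleft : LeftInverse F Enc) (hright : RightInverse F Enc)
    (hdet : ∀ x, (fderiv ℝ Enc x).det ≠ 0) :
    Measure.map Enc (volume.withDensity fun x => ENNReal.ofReal (p x)) =
      volume.withDensity fun z => ENNReal.ofReal (pushDensity Enc F p z) := by
  ext s hs
  have hEs : MeasurableSet (Enc ⁻¹' s) := hs.preimage hEnc.continuous.measurable
  rw [Measure.map_apply hEnc.continuous.measurable hs, withDensity_apply _ hEs,
    withDensity_apply _ hs]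
  conv_rhs => rw [← Set.image_preimage_eq s hright.surjective,
    lintegral_image_eq_lintegral_abs_det_fderiv_mul volume hEs
      (fun x _ => (hEnc x).hasFDerivAt.hasFDerivWithinAt) hleft.injective.injOn]
  refine setLIntegral_congr_fun hEs fun x _ => ?_
  rw [← ENNReal.ofReal_mul (abs_nonneg _), abs_det_mul_apply hleft (hdet x)]

theorem integrable_mul_iff {g : Euc d → ℝ}
    (hEnc : Differentiable ℝ Enc) (hleft : LeftInverse F Enc) (hright : RightInverse F Enc)
    (hdet : ∀ x, (fderiv ℝ Enc x).det ≠ 0) :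
    Integrable (fun z => pushDensity Enc F p z * g z) ↔ Integrable fun x => p x * g (Enc x) := by
  rw [← integrableOn_univ, ← Set.image_univ_of_surjective hright.surjective,
    integrableOn_image_iff_integrableOn_abs_det_fderiv_smul volume MeasurableSet.univ
      (fun x _ => (hEnc x).hasFDerivAt.hasFDerivWithinAt) hleft.injective.injOn,
    integrableOn_univ]
  simp only [smul_eq_mul, ← mul_assoc, abs_det_mul_apply hleft (hdet _)]

theorem integral_mul {g : Euc d → ℝ}
    (hEnc : Differentiable ℝ Enc) (hleft : LeftInverse F Enc) (hright : RightInverse F Enc)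
    (hdet : ∀ x, (fderiv ℝ Enc x).det ≠ 0) :
    ∫ z, pushDensity Enc F p z * g z = ∫ x, p x * g (Enc x) := by
  rw [← setIntegral_univ, ← Set.image_univ_of_surjective hright.surjective,
    integral_image_eq_integral_abs_det_fderiv_smul volume MeasurableSet.univ
      (fun x _ => (hEnc x).hasFDerivAt.hasFDerivWithinAt) hleft.injective.injOn,
    setIntegral_univ]
  simp only [smul_eq_mul, ← mul_assoc, abs_det_mul_apply hleft (hdet _)]

theorem log_eq_of_abs_det_eq {D : ℝ} (hD : ∀ x, |(fderiv ℝ Enc x).det| = D) (hD0 : D ≠ 0)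
    (hp0 : ∀ x, p x ≠ 0) :
    (fun z => Real.log (pushDensity Enc F p z)) = fun z => Real.log (p (F z)) - Real.log D := by
  funext z
  rw [pushDensity, hD, Real.log_div (hp0 _) hD0]

theorem fderiv_log_of_abs_det_eq {D : ℝ} (hD : ∀ x, |(fderiv ℝ Enc x).det| = D) (hD0 : D ≠ 0)
    (hp : Differentiable ℝ p) (hp0 : ∀ x, p x ≠ 0) (hF : Differentiable ℝ F) (z : Euc d) :
    fderiv ℝ (fun z => Real.log (pushDensity Enc F p z)) z =
      (fderiv ℝ (fun x => Real.log (p x)) (F z)).comp (fderiv ℝ F z) := by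
  rw [log_eq_of_abs_det_eq hD hD0 hp0, fderiv_sub_const]
  exact fderiv_comp z ((hp _).log (hp0 _)) (hF z)

theorem norm_gradient_log_bounds (hEnc : Differentiable ℝ Enc) (hF : Differentiable ℝ F)
    (hleft : LeftInverse F Enc) (hright : RightInverse F Enc)
    (hdet : ∀ x y, |(fderiv ℝ Enc x).det| = |(fderiv ℝ Enc y).det|) {c C : ℝ} (hc : 0 < c)
    (hC : 0 < C) (hlow : ∀ x v, c * ‖v‖ ≤ ‖fderiv ℝ Enc x v‖)
    (hup : ∀ x v, ‖fderiv ℝ Enc x v‖ ≤ C * ‖v‖) (hp : Differentiable ℝ p) (hp0 : ∀ x, p x ≠ 0)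
    (x : Euc d) :
    ‖gradient (fun y => Real.log (p y)) x‖ / C ≤
        ‖gradient (fun z => Real.log (pushDensity Enc F p z)) (Enc x)‖ ∧
      ‖gradient (fun z => Real.log (pushDensity Enc F p z)) (Enc x)‖ ≤
        ‖gradient (fun y => Real.log (p y)) x‖ / c := by
  have hBA := fderiv_comp_fderiv_of_leftInverse hleft (hF _) (hEnc x)
  have hAB : (fderiv ℝ Enc x).comp (fderiv ℝ F (Enc x)) = .id ℝ _ := by
    simpa only [hleft x] using fderiv_comp_fderiv_of_leftInverse hright (hEnc _) (hF (Enc x))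
  have hD0 : |(fderiv ℝ Enc 0).det| ≠ 0 :=
    abs_ne_zero.2 (det_fderiv_ne_zero_of_leftInverse hleft (hF _) (hEnc 0))
  rw [norm_gradient_eq_norm_fderiv, norm_gradient_eq_norm_fderiv,
    fderiv_log_of_abs_det_eq (fun y => hdet y 0) hD0 hp hp0 hF, hleft x]
  exact ⟨ContinuousLinearMap.div_le_opNorm_comp_of_comp_eq_id _ hBA hC
      (ContinuousLinearMap.opNorm_le_bound _ hC.le (hup x)),
    ContinuousLinearMap.opNorm_comp_le_div_of_comp_eq_id _ hAB hc (hlow x)⟩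

end pushDensity

theorem fisher_info_bounds_bilipschitz_encoder_general
    (d : ℕ) (Enc F : Euc d → Euc d)
    (hEnc : ContDiff ℝ 1 Enc) (hF : ContDiff ℝ 1 F)
    (hleft : Function.LeftInverse F Enc) (hright : Function.RightInverse F Enc)
    (hdet : ∀ x y : Euc d, |(fderiv ℝ Enc x).det| = |(fderiv ℝ Enc y).det|)
    (c C : ℝ) (hc : 0 < c) (hcC : c ≤ C)
    (hlow : ∀ (x v : Euc d), c * ‖v‖ ≤ ‖fderiv ℝ Enc x v‖)
    (hup : ∀ (x v : Euc d), ‖fderiv ℝ Enc x v‖ ≤ C * ‖v‖)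
    (p : Euc d → ℝ) (hp : ContDiff ℝ 1 p) (hppos : ∀ x, 0 < p x)
    (μ : Measure (Euc d))
    (hμ : μ = volume.withDensity fun x => ENNReal.ofReal (p x))
    (hFIfin : Integrable (fun x => p x * ‖gradient (fun y => Real.log (p y)) x‖ ^ 2)) :
    (Measure.map Enc μ = volume.withDensity fun z => ENNReal.ofReal (pushDensity Enc F p z)) ∧
    Integrable (fun z => pushDensity Enc F p z *
        ‖gradient (fun y => Real.log (pushDensity Enc F p y)) z‖ ^ 2) ∧
    (1 / C ^ 2) * fisherOfDensity p ≤ fisherOfDensity (pushDensity Enc F p) ∧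
    fisherOfDensity (pushDensity Enc F p) ≤ (1 / c ^ 2) * fisherOfDensity p ∧
    (c = 1 → C = 1 → fisherOfDensity (pushDensity Enc F p) = fisherOfDensity p) := by
  have hEd := hEnc.differentiable one_ne_zero
  have hFd := hF.differentiable one_ne_zero
  have hdet0 (x : Euc d) : (fderiv ℝ Enc x).det ≠ 0 :=
    det_fderiv_ne_zero_of_leftInverse hleft (hFd _) (hEd x)
  have hC : 0 < C := hc.trans_le hcC
  set φ : Euc d → ℝ := fun x =>
    p x * ‖gradient (fun y => Real.log (pushDensity Enc F p y)) (Enc x)‖ ^ 2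
  have hφ (x : Euc d) : 1 / C ^ 2 * (p x * ‖gradient (fun y => Real.log (p y)) x‖ ^ 2) ≤ φ x ∧
      φ x ≤ 1 / c ^ 2 * (p x * ‖gradient (fun y => Real.log (p y)) x‖ ^ 2) := by
    obtain ⟨hlower, hupper⟩ := pushDensity.norm_gradient_log_bounds hEd hFd hleft hright hdet hc
      hC hlow hup (hp.differentiable one_ne_zero) (fun x => (hppos x).ne') x
    have := (hppos x).le
    constructor
    · calc _ = p x * (‖gradient (fun y => Real.log (p y)) x‖ / C) ^ 2 := by ring
        _ ≤ p x * ‖gradient (fun y => Real.log (pushDensity Enc F p y)) (Enc x)‖ ^ 2 := by gcongr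
    · calc p x * ‖gradient (fun y => Real.log (pushDensity Enc F p y)) (Enc x)‖ ^ 2
          _ ≤ p x * (‖gradient (fun y => Real.log (p y)) x‖ / c) ^ 2 := by gcongr
          _ = _ := by ring
  have hφmeas : AEStronglyMeasurable φ := (hp.continuous.measurable.mul <|
    ((measurable_gradient _).comp hEd.continuous.measurable).norm.pow_const 2).aestronglyMeasurable
  obtain ⟨hφint, hlower, hupper⟩ := integrable_and_integral_bounds_of_le_const_mul hFIfin hφmeas
    (fun x => mul_nonneg (hppos x).le (sq_nonneg _)) (fun x => (hφ x).1) (fun x => (hφ x).2)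
  have hfisher : fisherOfDensity (pushDensity Enc F p) = ∫ x, φ x :=
    pushDensity.integral_mul hEd hleft hright hdet0
  rw [← fisherOfDensity, ← hfisher] at hlower hupper
  refine ⟨hμ ▸ pushDensity.map_withDensity hEd hleft hright hdet0,
    (pushDensity.integrable_mul_iff hEd hleft hright hdet0).2 hφint, hlower, hupper, ?_⟩
  rintro rfl rfl
  simpa using le_antisymm hupper hlower

/-- Fisher Information bounds for bi-Lipschitz encoders, full-dimensional
form.  If `Enc` is a `C¹` diffeomorphism with constant `|det DE|` and
`c‖v‖ ≤ ‖DE(x)v‖ ≤ C‖v‖`, and `μ` has `C¹` strictly positive density `p` with finite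
Fisher Information, then `E_#μ` has density `q(z) = p(E⁻¹ z)/|det DE(E⁻¹ z)|`, finite
Fisher Information, `(1/C²) I(μ) ≤ I(E_#μ) ≤ (1/c²) I(μ)`, with equality when `c = C = 1`. -/
theorem fisher_info_bounds_bilipschitz_encoder
    (d : ℕ) (hd : 1 ≤ d) (Enc F : Euc d → Euc d)
    (hEnc : ContDiff ℝ 1 Enc) (hF : ContDiff ℝ 1 F)
    (hleft : Function.LeftInverse F Enc) (hright : Function.RightInverse F Enc)
    (hdet : ∀ x y : Euc d, |(fderiv ℝ Enc x).det| = |(fderiv ℝ Enc y).det|)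
    (c C : ℝ) (hc : 0 < c) (hcC : c ≤ C)
    (hlow : ∀ (x v : Euc d), c * ‖v‖ ≤ ‖fderiv ℝ Enc x v‖)
    (hup : ∀ (x v : Euc d), ‖fderiv ℝ Enc x v‖ ≤ C * ‖v‖)
    (p : Euc d → ℝ) (hp : ContDiff ℝ 1 p) (hppos : ∀ x, 0 < p x)
    (μ : Measure (Euc d)) [IsProbabilityMeasure μ]
    (hμ : μ = volume.withDensity fun x => ENNReal.ofReal (p x))
    (hFIfin : Integrable (fun x => p x * ‖gradient (fun y => Real.log (p y)) x‖ ^ 2)) :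
    (Measure.map Enc μ = volume.withDensity fun z => ENNReal.ofReal (pushDensity Enc F p z)) ∧
    Integrable (fun z => pushDensity Enc F p z *
        ‖gradient (fun y => Real.log (pushDensity Enc F p y)) z‖ ^ 2) ∧
    (1 / C ^ 2) * fisherOfDensity p ≤ fisherOfDensity (pushDensity Enc F p) ∧
    fisherOfDensity (pushDensity Enc F p) ≤ (1 / c ^ 2) * fisherOfDensity p ∧
    (c = 1 → C = 1 → fisherOfDensity (pushDensity Enc F p) = fisherOfDensity p) :=
  fisher_info_bounds_bilipschitz_encoder_general d Enc F hEnc hF hleft hright hdet c C hc hcC hlow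
    hup p hp hppos μ hμ hFIfin
end
end

section
/- (Spherical moment lower bound for metric distortion.) Let m ≥ 2 and d ≥ 1, let A ∈ ℝ^{d×m} be any matrix, and let σ denote the surface measure on the unit sphere S^{m−1} ⊂ ℝ^m. Then ∫_{S^{m−1}} (‖A v‖² − 1)² dσ(v) ≥ (2 σ(S^{m−1}) / (m(m+2))) · ‖AᵀA − I_m‖₂², where ‖·‖₂ denotes the operator (spectral) norm of a matrix. -/
open MeasureTheory

noncomputable section

/-!
Write `M = AᵀA - I`, so that `‖Av‖² - 1 = vᵀMv` on the sphere. Diagonalising `M` by an orthogonal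
change of variables, which preserves `σ`, turns `vᵀMv` into `∑ λₖ vₖ²`, so only the moments
`∫ vₖ² vₗ² dσ` are needed. The swap of two coordinates shows that `c = ∫ vₖ⁴ dσ` does not depend on
`k`, and the 45° reflection of the `(k, l)`-plane, which exchanges `vₖ² - vₗ²` and `2 vₖ vₗ`, gives
`2c - 2∫ vₖ² vₗ² = 4∫ vₖ² vₗ²`, i.e. `∫ vₖ² vₗ² = c / 3` for `k ≠ l`. Since `∑ₖₗ vₖ² vₗ² = 1` on the
sphere, `c / 3 = σ(S) / (m (m + 2))`, hence
`∫ (vᵀMv)² dσ = σ(S) / (m (m + 2)) · ((∑ λₖ)² + 2 ∑ λₖ²)`, and `‖M‖₂² = maxₖ λₖ² ≤ ∑ λₖ²`.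
-/

open Metric Matrix

theorem Matrix.norm_mulVec_sq_sub_norm_sq {m n : Type*} [Fintype m] [Fintype n] [DecidableEq n]
    (A : Matrix m n ℝ) (v : EuclideanSpace ℝ n) :
    ‖(EuclideanSpace.equiv m ℝ).symm (A *ᵥ EuclideanSpace.equiv n ℝ v)‖ ^ 2 - ‖v‖ ^ 2 =
      v.ofLp ⬝ᵥ ((Aᵀ * A - 1) *ᵥ v.ofLp) := by
  rw [EuclideanSpace.real_norm_sq_eq, EuclideanSpace.real_norm_sq_eq, sub_mulVec, one_mulVec,
    dotProduct_sub, ← mulVec_mulVec, dotProduct_mulVec, vecMul_transpose]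
  simp only [dotProduct, sq]
  rfl

namespace Matrix.IsHermitian

variable {n : Type*} [Fintype n] [DecidableEq n] {M : Matrix n n ℝ}

open scoped Matrix.Norms.L2Operator in
theorem norm_toEuclideanCLM_sq_le_sum_eigenvalues_sq (hM : M.IsHermitian) :
    ‖toEuclideanCLM (𝕜 := ℝ) (n := n) M‖ ^ 2 ≤ ∑ i, hM.eigenvalues i ^ 2 := by
  have hnorm : ‖toEuclideanCLM (𝕜 := ℝ) (n := n) M‖ = ‖hM.eigenvalues‖ := by
    rw [← cstar_norm_def]
    conv_lhs => rw [hM.spectral_theorem]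
    rw [Unitary.conjStarAlgAut_apply,
      CStarRing.norm_mul_mem_unitary _ (Unitary.star_mem hM.eigenvectorUnitary.2),
      CStarRing.norm_mem_unitary_mul _ hM.eigenvectorUnitary.2, l2_opNorm_diagonal]
    rfl
  have hbound : ‖hM.eigenvalues‖ ≤ √(∑ i, hM.eigenvalues i ^ 2) :=
    (pi_norm_le_iff_of_nonneg (Real.sqrt_nonneg _)).2 fun i => Real.abs_le_sqrt <|
      Finset.single_le_sum (f := fun j => hM.eigenvalues j ^ 2) (fun _ _ => sq_nonneg _)
        (Finset.mem_univ i)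
  calc ‖toEuclideanCLM (𝕜 := ℝ) (n := n) M‖ ^ 2 ≤ √(∑ i, hM.eigenvalues i ^ 2) ^ 2 := by
        rw [hnorm]; gcongr
    _ = ∑ i, hM.eigenvalues i ^ 2 := Real.sq_sqrt (by positivity)

theorem dotProduct_mulVec_self (hM : M.IsHermitian) (v : EuclideanSpace ℝ n) :
    v.ofLp ⬝ᵥ (M *ᵥ v.ofLp) = ∑ i, hM.eigenvalues i * hM.eigenvectorBasis.repr v i ^ 2 := by
  set U : Matrix n n ℝ := (hM.eigenvectorUnitary : Matrix n n ℝ)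
  have hrepr : star U *ᵥ v.ofLp = hM.eigenvectorBasis.repr v := by
    ext i
    simp [U, OrthonormalBasis.repr_apply_apply, mulVec, dotProduct,
      EuclideanSpace.inner_eq_star_dotProduct, mul_comm]
  conv_lhs => rw [hM.spectral_theorem]
  rw [Unitary.conjStarAlgAut_apply, ← mulVec_mulVec, ← mulVec_mulVec, dotProduct_mulVec,
    ← mulVec_transpose, ← conjTranspose_eq_transpose_of_trivial, ← star_eq_conjTranspose, hrepr]
  simp only [mulVec_diagonal, dotProduct, RCLike.ofReal_real_eq_id, Function.id_comp]
  exact Finset.sum_congr rfl fun i _ => by ring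

end Matrix.IsHermitian

theorem LinearIsometryEquiv.measurePreserving_hausdorffMeasure_restrict_sphere {E : Type*}
    [NormedAddCommGroup E] [NormedSpace ℝ E] [MeasurableSpace E] [BorelSpace E]
    (L : E ≃ₗᵢ[ℝ] E) (s r : ℝ) :
    MeasurePreserving L (μH[s].restrict (sphere 0 r)) (μH[s].restrict (sphere 0 r)) := by
  have h := (L.toIsometryEquiv.measurePreserving_hausdorffMeasure s).restrict_preimage
    (isClosed_sphere (x := (0 : E)) (ε := r)).measurableSet
  have hpre : L.toIsometryEquiv ⁻¹' sphere 0 r = sphere 0 r := by ext v; simp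
  rwa [hpre] at h

namespace EuclideanSpace

variable {ι : Type*} [Fintype ι] [DecidableEq ι]

def hadamardReflection (i j : ι) (hij : i ≠ j) :
    EuclideanSpace ℝ ι ≃ₗᵢ[ℝ] EuclideanSpace ℝ ι :=
  LinearIsometry.toLinearIsometryEquiv
    { toFun v := WithLp.toLp 2 <|
        Function.update (Function.update v.ofLp i ((v i + v j) / √2)) j ((v i - v j) / √2)
      map_add' v w := by ext t; simp [Function.update_apply]; split_ifs <;> ring
      map_smul' c v := by ext t; simp [Function.update_apply]; split_ifs <;> ring
      norm_map' v := by
        rw [← sq_eq_sq₀ (norm_nonneg _) (norm_nonneg _), real_norm_sq_eq, real_norm_sq_eq,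
          ← sub_eq_zero, ← Finset.sum_sub_distrib,
          Fintype.sum_eq_add i j hij fun t ht => by simp [ht.1, ht.2]]
        simp [hij, div_pow]
        ring } rfl

theorem two_mul_hadamardReflection_apply_mul_apply {i j : ι} (hij : i ≠ j)
    (v : EuclideanSpace ℝ ι) :
    2 * hadamardReflection i j hij v i * hadamardReflection i j hij v j = v i ^ 2 - v j ^ 2 := by
  simp [hadamardReflection, hij]
  field_simp
  rw [Real.sq_sqrt zero_le_two]
  ring

end EuclideanSpace

theorem sum_sum_mul_mul_ite_three_one {ι : Type*} [Fintype ι] [DecidableEq ι] (a : ι → ℝ) :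
    ∑ k, ∑ l, a k * a l * (if k = l then 3 else 1 : ℝ) = (∑ k, a k) ^ 2 + 2 * ∑ k, a k ^ 2 := by
  simp_rw [show ∀ k l : ι, (if k = l then 3 else 1 : ℝ) = 1 + if k = l then 2 else 0 from
    fun k l => by split_ifs <;> norm_num]
  simp only [mul_add, mul_one, Finset.sum_add_distrib, mul_ite, mul_zero, Finset.sum_ite_eq,
    Finset.mem_univ, if_true]
  rw [sq, Finset.sum_mul_sum, Finset.mul_sum]
  exact congrArg _ (Finset.sum_congr rfl fun k _ => by ring)

namespace SphericalMoment

variable {ι : Type*} [Fintype ι]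

def fourthMoment (ν : Measure (EuclideanSpace ℝ ι)) (i j : ι) : ℝ :=
  ∫ v, v i ^ 2 * v j ^ 2 ∂ν

variable {ν : Measure (EuclideanSpace ℝ ι)}

theorem integrable_sq_mul_sq [IsFiniteMeasure ν] (hν : ∀ᵐ v ∂ν, ‖v‖ = 1) (i j : ι) :
    Integrable (fun v : EuclideanSpace ℝ ι => v i ^ 2 * v j ^ 2) ν := by
  refine Integrable.of_bound (C := 1) (by fun_prop) ?_
  filter_upwards [hν] with v hv
  have hcoord (k : ι) : v k ^ 2 ≤ 1 := by
    simpa [hv] using pow_le_pow_left₀ (abs_nonneg _) (PiLp.norm_apply_le v k) 2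
  rw [Real.norm_eq_abs, abs_of_nonneg (by positivity)]
  exact mul_le_one₀ (hcoord i) (sq_nonneg _) (hcoord j)

theorem integral_sum_mul_sq_sq [IsFiniteMeasure ν] (hν : ∀ᵐ v ∂ν, ‖v‖ = 1) (a : ι → ℝ) :
    ∫ v, (∑ k, a k * v k ^ 2) ^ 2 ∂ν = ∑ k, ∑ l, a k * a l * fourthMoment ν k l := by
  have I := integrable_sq_mul_sq hν
  have hexp (v : EuclideanSpace ℝ ι) :
      (∑ k, a k * v k ^ 2) ^ 2 = ∑ k, ∑ l, a k * a l * (v k ^ 2 * v l ^ 2) := by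
    rw [sq, Finset.sum_mul_sum]
    exact Finset.sum_congr rfl fun k _ => Finset.sum_congr rfl fun l _ => by ring
  simp_rw [hexp]
  rw [integral_finsetSum _ fun k _ => integrable_finsetSum _ fun l _ => (I k l).const_mul _]
  refine Finset.sum_congr rfl fun k _ => ?_
  rw [integral_finsetSum _ fun l _ => (I k l).const_mul _]
  exact Finset.sum_congr rfl fun l _ => integral_const_mul _ _

theorem integral_comp_linearIsometryEquiv
    (hinv : ∀ L : EuclideanSpace ℝ ι ≃ₗᵢ[ℝ] EuclideanSpace ℝ ι, MeasurePreserving L ν ν)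
    (L : EuclideanSpace ℝ ι ≃ₗᵢ[ℝ] EuclideanSpace ℝ ι) (f : EuclideanSpace ℝ ι → ℝ) :
    ∫ v, f (L v) ∂ν = ∫ v, f v ∂ν :=
  (hinv L).integral_comp L.toHomeomorph.measurableEmbedding f

theorem fourthMoment_perm
    (hinv : ∀ L : EuclideanSpace ℝ ι ≃ₗᵢ[ℝ] EuclideanSpace ℝ ι, MeasurePreserving L ν ν)
    (e : Equiv.Perm ι) (i j : ι) :
    fourthMoment ν (e i) (e j) = fourthMoment ν i j := by
  have := integral_comp_linearIsometryEquiv hinv (LinearIsometryEquiv.piLpCongrLeft 2 ℝ ℝ e)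
    fun v => v (e i) ^ 2 * v (e j) ^ 2
  simpa [fourthMoment, LinearIsometryEquiv.piLpCongrLeft_apply, Equiv.piCongrLeft'_apply]
    using this.symm

variable [DecidableEq ι]

theorem fourthMoment_self_eq_three_mul [IsFiniteMeasure ν] (hν : ∀ᵐ v ∂ν, ‖v‖ = 1)
    (hinv : ∀ L : EuclideanSpace ℝ ι ≃ₗᵢ[ℝ] EuclideanSpace ℝ ι, MeasurePreserving L ν ν)
    {i j : ι} (hij : i ≠ j) :
    fourthMoment ν i i = 3 * fourthMoment ν i j := by
  have I := integrable_sq_mul_sq hν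
  have hswap : fourthMoment ν j j = fourthMoment ν i i := by
    simpa using fourthMoment_perm hinv (Equiv.swap i j) i i
  have hrot : ∫ v, (v i ^ 2 - v j ^ 2) ^ 2 ∂ν = ∫ v, (2 * v i * v j) ^ 2 ∂ν := by
    simp_rw [← EuclideanSpace.two_mul_hadamardReflection_apply_mul_apply hij]
    exact integral_comp_linearIsometryEquiv hinv _ fun v => (2 * v i * v j) ^ 2
  have hlhs : ∫ v, (v i ^ 2 - v j ^ 2) ^ 2 ∂ν =
      fourthMoment ν i i + fourthMoment ν j j - 2 * fourthMoment ν i j := by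
    simp_rw [show ∀ v : EuclideanSpace ℝ ι, (v i ^ 2 - v j ^ 2) ^ 2 =
      v i ^ 2 * v i ^ 2 + v j ^ 2 * v j ^ 2 - 2 * (v i ^ 2 * v j ^ 2) from fun v => by ring]
    have hsum : Integrable
        (fun v : EuclideanSpace ℝ ι => v i ^ 2 * v i ^ 2 + v j ^ 2 * v j ^ 2) ν :=
      (I i i).add (I j j)
    rw [integral_sub hsum ((I i j).const_mul 2), integral_add (I i i) (I j j), integral_const_mul]
    rfl
  have hrhs : ∫ v, (2 * v i * v j) ^ 2 ∂ν = 4 * fourthMoment ν i j := by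
    simp_rw [show ∀ v : EuclideanSpace ℝ ι, (2 * v i * v j) ^ 2 = 4 * (v i ^ 2 * v j ^ 2)
      from fun v => by ring]
    exact integral_const_mul _ _
  linarith

theorem fourthMoment_eq [IsFiniteMeasure ν] (hν : ∀ᵐ v ∂ν, ‖v‖ = 1)
    (hinv : ∀ L : EuclideanSpace ℝ ι ≃ₗᵢ[ℝ] EuclideanSpace ℝ ι, MeasurePreserving L ν ν)
    (i₀ k l : ι) :
    fourthMoment ν k l = fourthMoment ν i₀ i₀ / 3 * if k = l then 3 else 1 := by
  have hdiag (k : ι) : fourthMoment ν k k = fourthMoment ν i₀ i₀ := by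
    simpa using fourthMoment_perm hinv (Equiv.swap i₀ k) i₀ i₀
  split_ifs with hkl
  · rw [hkl, hdiag]; ring
  · linarith [fourthMoment_self_eq_three_mul hν hinv hkl, hdiag k]

theorem integral_sum_mul_sq_sq_eq [IsFiniteMeasure ν] (hν : ∀ᵐ v ∂ν, ‖v‖ = 1)
    (hinv : ∀ L : EuclideanSpace ℝ ι ≃ₗᵢ[ℝ] EuclideanSpace ℝ ι, MeasurePreserving L ν ν)
    (a : ι → ℝ) :
    ∫ v, (∑ k, a k * v k ^ 2) ^ 2 ∂ν = ν.real Set.univ / (Fintype.card ι * (Fintype.card ι + 2)) *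
      ((∑ k, a k) ^ 2 + 2 * ∑ k, a k ^ 2) := by
  rcases isEmpty_or_nonempty ι with hι | ⟨⟨i₀⟩⟩
  · simp
  have hformula (a : ι → ℝ) : ∫ v, (∑ k, a k * v k ^ 2) ^ 2 ∂ν =
      fourthMoment ν i₀ i₀ / 3 * ((∑ k, a k) ^ 2 + 2 * ∑ k, a k ^ 2) := by
    rw [integral_sum_mul_sq_sq hν, ← sum_sum_mul_mul_ite_three_one, Finset.mul_sum]
    refine Finset.sum_congr rfl fun k _ => ?_
    rw [Finset.mul_sum]
    refine Finset.sum_congr rfl fun l _ => ?_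
    rw [fourthMoment_eq hν hinv i₀ k l]
    ring
  have hmass : ∫ v, (∑ k, (1 : ι → ℝ) k * v k ^ 2) ^ 2 ∂ν = ν.real Set.univ := by
    rw [← mul_one (ν.real Set.univ), ← smul_eq_mul, ← integral_const]
    refine integral_congr_ae ?_
    filter_upwards [hν] with v hv
    simp only [Pi.one_apply, one_mul]
    rw [← EuclideanSpace.real_norm_sq_eq, hv, one_pow, one_pow]
  have hcard : (0 : ℝ) < Fintype.card ι := Nat.cast_pos.2 (Fintype.card_pos_iff.2 ⟨i₀⟩)
  rw [hformula, ← hmass, hformula]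
  simp only [Pi.one_apply, Finset.sum_const, Finset.card_univ, nsmul_eq_mul, one_pow, mul_one]
  field_simp

theorem le_integral_dotProduct_mulVec_sq [IsFiniteMeasure ν] (hν : ∀ᵐ v ∂ν, ‖v‖ = 1)
    (hinv : ∀ L : EuclideanSpace ℝ ι ≃ₗᵢ[ℝ] EuclideanSpace ℝ ι, MeasurePreserving L ν ν)
    {M : Matrix ι ι ℝ} (hM : M.IsHermitian) :
    2 * ν.real Set.univ / (Fintype.card ι * (Fintype.card ι + 2)) *
        ‖toEuclideanCLM (𝕜 := ℝ) (n := ι) M‖ ^ 2 ≤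
      ∫ v, (v.ofLp ⬝ᵥ (M *ᵥ v.ofLp)) ^ 2 ∂ν := by
  set b := ν.real Set.univ / (Fintype.card ι * (Fintype.card ι + 2))
  have hb : 0 ≤ b := by positivity
  have hdiag : ∫ v, (v.ofLp ⬝ᵥ (M *ᵥ v.ofLp)) ^ 2 ∂ν =
      b * ((∑ k, hM.eigenvalues k) ^ 2 + 2 * ∑ k, hM.eigenvalues k ^ 2) := by
    simp_rw [hM.dotProduct_mulVec_self]
    rw [integral_comp_linearIsometryEquiv hinv hM.eigenvectorBasis.repr
      fun w => (∑ k, hM.eigenvalues k * w k ^ 2) ^ 2, integral_sum_mul_sq_sq_eq hν hinv]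
  rw [hdiag, mul_div_assoc, mul_assoc]
  calc 2 * (b * ‖toEuclideanCLM (𝕜 := ℝ) (n := ι) M‖ ^ 2)
      ≤ 2 * (b * ∑ k, hM.eigenvalues k ^ 2) := by
        gcongr; exact hM.norm_toEuclideanCLM_sq_le_sum_eigenvalues_sq
    _ ≤ b * ((∑ k, hM.eigenvalues k) ^ 2 + 2 * ∑ k, hM.eigenvalues k ^ 2) := by
        nlinarith [mul_nonneg hb (sq_nonneg (∑ k, hM.eigenvalues k))]

end SphericalMoment

theorem spherical_moment_lower_bound_general (m d : ℕ)
    (A : Matrix (Fin d) (Fin m) ℝ) :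
    2 * (μH[(m : ℝ) - 1] (Metric.sphere (0 : Euc m) 1)).toReal / ((m : ℝ) * (m + 2)) *
        ‖Matrix.toEuclideanCLM (𝕜 := ℝ) (n := Fin m) (A.transpose * A - 1)‖ ^ 2 ≤
      ∫ v in Metric.sphere (0 : Euc m) 1,
        (‖(EuclideanSpace.equiv (Fin d) ℝ).symm
            (A.mulVec (EuclideanSpace.equiv (Fin m) ℝ v))‖ ^ 2 - 1) ^ 2
          ∂(μH[(m : ℝ) - 1]) := by
  by_cases hS : μH[(m : ℝ) - 1] (sphere (0 : Euc m) 1) = ⊤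
  · rw [hS, ENNReal.toReal_top, mul_zero, zero_div, zero_mul]
    exact integral_nonneg fun _ => sq_nonneg _
  have : IsFiniteMeasure (μH[(m : ℝ) - 1].restrict (sphere (0 : Euc m) 1)) :=
    isFiniteMeasure_restrict.2 hS
  have hM : (Aᵀ * A - 1).IsHermitian := by
    simpa using (isHermitian_conjTranspose_mul_self A).sub isHermitian_one
  have h := SphericalMoment.le_integral_dotProduct_mulVec_sq
    (ν := μH[(m : ℝ) - 1].restrict (sphere 0 1))
    (ae_restrict_of_forall_mem isClosed_sphere.measurableSet fun v hv =>
      mem_sphere_zero_iff_norm.1 hv)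
    (fun L => L.measurePreserving_hausdorffMeasure_restrict_sphere _ _) hM
  rw [Fintype.card_fin, measureReal_restrict_apply_univ] at h
  refine h.trans_eq (setIntegral_congr_fun isClosed_sphere.measurableSet fun v hv => ?_)
  rw [← norm_mulVec_sq_sub_norm_sq, mem_sphere_zero_iff_norm.1 hv, one_pow]

/-- spherical moment lower bound for metric distortion. For any matrix
`A ∈ ℝ^{d×m}`, integrating against the surface (Hausdorff) measure `σ` on the unit
sphere `S^{m−1}`:
`∫_{S^{m−1}} (‖Av‖² − 1)² dσ(v) ≥ (2σ(S^{m−1})/(m(m+2))) ‖AᵀA − I_m‖₂²`. -/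
theorem spherical_moment_lower_bound (m d : ℕ) (hm : 2 ≤ m) (hd : 1 ≤ d)
    (A : Matrix (Fin d) (Fin m) ℝ) :
    2 * (μH[(m : ℝ) - 1] (Metric.sphere (0 : Euc m) 1)).toReal / ((m : ℝ) * (m + 2)) *
        ‖Matrix.toEuclideanCLM (𝕜 := ℝ) (n := Fin m) (A.transpose * A - 1)‖ ^ 2 ≤
      ∫ v in Metric.sphere (0 : Euc m) 1,
        (‖(EuclideanSpace.equiv (Fin d) ℝ).symm
            (A.mulVec (EuclideanSpace.equiv (Fin m) ℝ v))‖ ^ 2 - 1) ^ 2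
          ∂(μH[(m : ℝ) - 1]) :=
  spherical_moment_lower_bound_general m d A
end
end
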